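/- Let (X,d) be a metric space, f : X → ℝ bounded and continuous, p ≥ 2, and define the Hopf–Lax operator Q_t f(x) = inf_{y ∈ X} { d(x,y)^p / t^{p-1} + f(y) } for t > 0. Then for each x, Q_t f(x) → f(x) as t → 0⁺. -/
import Mathlib


open Filter Topology

/-- For a bounded continuous `f` on a metric space and `p ≥ 2`, the Hopf–Lax
operator `Q_t f(x) = inf_y { d(x,y)^p / t^(p-1) + f(y) }` converges pointwise
to `f` as `t → 0⁺`. -/
theorem stmt_5 {X : Type*} [MetricSpace X] (f : X → ℝ) (hfc : Continuous f)
    (hfb : ∃ M : ℝ, ∀ x, |f x| ≤ M) (p : ℝ) (hp : 2 ≤ p) (x : X) :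
    Tendsto (fun t : ℝ => ⨅ y : X, (dist x y ^ p / t ^ (p - 1) + f y))
      (𝓝[>] 0) (𝓝 (f x)) := by
  haveI : Nonempty X := ⟨x⟩
  obtain ⟨M, hM⟩ := hfb
  have hM0 : 0 ≤ M := le_trans (abs_nonneg _) (hM x)
  have hp1 : (1:ℝ) ≤ p - 1 := by linarith
  have hp0 : 0 < p := by linarith
  have hbdd : ∀ t : ℝ, 0 < t →
      BddBelow (Set.range fun y => dist x y ^ p / t ^ (p-1) + f y) := by
    intro t ht
    refine ⟨-M, ?_⟩
    rintro _ ⟨y, rfl⟩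
    have h1 : 0 ≤ dist x y ^ p / t ^ (p-1) :=
      div_nonneg (Real.rpow_nonneg dist_nonneg _) (Real.rpow_nonneg ht.le _)
    have h2 : -M ≤ f y := neg_le_of_abs_le (hM y)
    linarith
  have hub : ∀ t : ℝ, 0 < t → (⨅ y, dist x y ^ p / t ^ (p-1) + f y) ≤ f x := by
    intro t ht
    have := ciInf_le (hbdd t ht) x
    simpa [dist_self, Real.zero_rpow (ne_of_gt hp0)] using this
  rw [tendsto_order]
  constructor
  · intro a ha
    set ε := f x - a with hεdef
    have hεpos : 0 < ε := by simp [hεdef]; linarith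
    obtain ⟨δ, hδ, hδf⟩ := Metric.continuous_iff.1 hfc x (ε/2) (by linarith)
    have hδp : 0 < δ ^ p := Real.rpow_pos_of_pos hδ p
    set c := δ ^ p / (2*M + 1) with hc
    have hcpos : 0 < c := div_pos hδp (by linarith)
    set r := min 1 c with hr
    have hrpos : 0 < r := lt_min one_pos hcpos
    have hmem : Set.Ioo (0:ℝ) r ∈ 𝓝[>] (0:ℝ) :=
      Ioo_mem_nhdsGT_of_mem ⟨le_refl 0, hrpos⟩
    filter_upwards [hmem] with t ht
    obtain ⟨ht0, htr⟩ := ht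
    have htp : t ^ (p-1) < c := by
      calc t ^ (p-1) ≤ t ^ (1:ℝ) :=
            Real.rpow_le_rpow_of_exponent_ge ht0 (le_of_lt (lt_of_lt_of_le htr (min_le_left _ _))) hp1
        _ = t := Real.rpow_one t
        _ < c := lt_of_lt_of_le htr (min_le_right _ _)
    have htppos : 0 < t ^ (p-1) := Real.rpow_pos_of_pos ht0 _
    have key : ∀ y, f x - ε/2 ≤ dist x y ^ p / t ^ (p-1) + f y := by
      intro y
      by_cases hy : dist y x < δ
      · have h1 : 0 ≤ dist x y ^ p / t ^ (p-1) :=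
          div_nonneg (Real.rpow_nonneg dist_nonneg _) htppos.le
        have h2 : |f y - f x| < ε/2 := by
          simpa [Real.dist_eq] using hδf y hy
        have := abs_lt.1 h2
        linarith [this.1]
      · push_neg at hy
        have hdp : δ ^ p ≤ dist x y ^ p := by
          apply Real.rpow_le_rpow hδ.le _ hp0.le
          rwa [dist_comm]
        have h3 : 2*M + 1 < δ ^ p / t ^ (p-1) := by
          rw [lt_div_iff₀ htppos]
          calc (2*M+1) * t ^ (p-1) < (2*M+1) * c := by
                apply mul_lt_mul_of_pos_left htp; linarith
            _ = δ ^ p := by rw [hc]; field_simp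
        have h4 : δ ^ p / t ^ (p-1) ≤ dist x y ^ p / t ^ (p-1) := by gcongr
        have h5 : -M ≤ f y := neg_le_of_abs_le (hM y)
        have h6 : f x ≤ M := le_of_abs_le (hM x)
        linarith
    have hinf := le_ciInf key
    have : a = f x - ε := by rw [hεdef]; ring
    linarith
  · intro b hb
    filter_upwards [self_mem_nhdsWithin] with t ht
    exact lt_of_le_of_lt (hub t ht) hb
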